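/- Every transition system T has a refinement S (T ⇝ S) such that for every refinement R of S and every CTL state formula Φ, S satisfies Φ if and only if R satisfies Φ. -/

import Mathlib

namespace MLAR

/-- Modal formulas over a countably infinite set of propositional variables (indexed by ℕ). -/
inductive MF : Type where
  | top : MF
  | var : ℕ → MF
  | and : MF → MF → MF
  | neg : MF → MF
  | dia : MF → MF

namespace MF

/-- □φ := ¬◇¬φ -/
def box (φ : MF) : MF := neg (dia (neg φ))

/-- Material implication, definable classically from ∧ and ¬. -/
def imp (φ ψ : MF) : MF := neg (and φ (neg ψ))

/-- Uniform substitution. -/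
def subst (σ : ℕ → MF) : MF → MF
  | top => top
  | var p => σ p
  | and φ ψ => and (subst σ φ) (subst σ ψ)
  | neg φ => neg (subst σ φ)
  | dia φ => dia (subst σ φ)

/-- Satisfaction of a modal formula at a world of a Kripke model. -/
def Sat {W : Type*} (R : W → W → Prop) (V : ℕ → Set W) : MF → W → Prop
  | top, _ => True
  | var p, w => w ∈ V p
  | and φ ψ, w => Sat R V φ w ∧ Sat R V ψ w
  | neg φ, w => ¬ Sat R V φ w
  | dia φ, w => ∃ v, R w v ∧ Sat R V φ v

end MF

/-- A boolean evaluation: respects ⊤, ∧, ¬, treating variables and ◇-formulas as atoms. -/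
def IsPropEval (v : MF → Prop) : Prop :=
  v MF.top ∧ (∀ φ ψ, v (MF.and φ ψ) ↔ (v φ ∧ v ψ)) ∧ (∀ φ, v (MF.neg φ) ↔ ¬ v φ)

/-- Propositional tautologies. -/
def IsTautology (φ : MF) : Prop := ∀ v, IsPropEval v → v φ

/-- The K-axiom □(p→q)→(□p→□q). -/
def axK : MF := (((MF.var 0).imp (MF.var 1)).box).imp (((MF.var 0).box).imp ((MF.var 1).box))

/-- Normal modal logics. -/
def IsNormal (L : Set MF) : Prop :=
  (∀ φ, IsTautology φ → φ ∈ L) ∧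
  axK ∈ L ∧
  (∀ φ ψ, φ ∈ L → φ.imp ψ ∈ L → ψ ∈ L) ∧
  (∀ φ σ, φ ∈ L → φ.subst σ ∈ L) ∧
  (∀ φ, φ ∈ L → φ.box ∈ L)

/-- The smallest normal modal logic containing Γ. -/
def KPlus (Γ : Set MF) : Set MF := ⋂₀ {L | IsNormal L ∧ Γ ⊆ L}

/-- (T) = p → ◇p -/
def axT : MF := (MF.var 0).imp ((MF.var 0).dia)
/-- (4) = ◇◇p → ◇p -/
def ax4 : MF := ((MF.var 0).dia.dia).imp ((MF.var 0).dia)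
/-- (.2) = ◇□p → □◇p -/
def axDot2 : MF := ((MF.var 0).box.dia).imp ((MF.var 0).dia.box)
/-- (.1) = □◇p → ◇□p -/
def axDot1 : MF := ((MF.var 0).dia.box).imp ((MF.var 0).box.dia)
/-- Grzegorczyk axiom □(□(p→□p)→p)→p -/
def axGrz : MF := ((((MF.var 0).imp ((MF.var 0).box)).box.imp (MF.var 0)).box).imp (MF.var 0)

def S4 : Set MF := KPlus {axT, ax4}
def S4Dot2 : Set MF := KPlus {axT, ax4, axDot2}
def S4Dot1 : Set MF := KPlus {axT, ax4, axDot1}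
def S4Dot2Dot1 : Set MF := KPlus {axT, ax4, axDot2, axDot1}
def Grz : Set MF := KPlus {axGrz}

/-- Transition systems over a set AP of atomic propositions. -/
structure TS (AP : Type) : Type 1 where
  State : Type
  rel : State → State → Prop
  init : Set State
  label : State → Set AP
  nonempty : Nonempty State
  serial : ∀ s, ∃ t, rel s t

/-- `f` witnesses that T₁ is an abstraction of T₂. -/
def IsAbstractionMap {AP : Type} (T₁ T₂ : TS AP) (f : T₂.State → T₁.State) : Prop :=
  Function.Surjective f ∧
  (∀ s, T₁.label (f s) = T₂.label s) ∧
  (∀ a b, T₁.rel a b ↔ ∃ s t, T₂.rel s t ∧ f s = a ∧ f t = b) ∧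
  T₁.init = f '' T₂.init

/-- `Abs T₁ T₂` : T₁ is an abstraction of T₂ (written T₁ ⇝ T₂; T₂ is a refinement of T₁). -/
def Abs {AP : Type} (T₁ T₂ : TS AP) : Prop := ∃ f, IsAbstractionMap T₁ T₂ f

mutual
/-- CTL state formulas. -/
inductive CTLs (AP : Type) : Type where
  | top : CTLs AP
  | atom : AP → CTLs AP
  | and : CTLs AP → CTLs AP → CTLs AP
  | neg : CTLs AP → CTLs AP
  | ex : CTLp AP → CTLs AP
  | al : CTLp AP → CTLs AP
/-- CTL path formulas. -/
inductive CTLp (AP : Type) : Type where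
  | next : CTLs AP → CTLp AP
  | untl : CTLs AP → CTLs AP → CTLp AP
end

/-- Infinite paths of a transition system. -/
def TS.IsPath {AP : Type} (T : TS AP) (π : ℕ → T.State) : Prop := ∀ i, T.rel (π i) (π (i + 1))

mutual
/-- Satisfaction of CTL state formulas at states. -/
def CTLs.Sat {AP : Type} (T : TS AP) : CTLs AP → T.State → Prop
  | .top, _ => True
  | .atom a, s => a ∈ T.label s
  | .and φ ψ, s => CTLs.Sat T φ s ∧ CTLs.Sat T ψ s
  | .neg φ, s => ¬ CTLs.Sat T φ s
  | .ex φ, s => ∃ π, T.IsPath π ∧ π 0 = s ∧ CTLp.Sat T φ π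
  | .al φ, s => ∀ π, T.IsPath π → π 0 = s → CTLp.Sat T φ π
/-- Satisfaction of CTL path formulas on paths. -/
def CTLp.Sat {AP : Type} (T : TS AP) : CTLp AP → (ℕ → T.State) → Prop
  | .next φ, π => CTLs.Sat T φ (π 1)
  | .untl φ ψ, π => ∃ j, CTLs.Sat T ψ (π j) ∧ ∀ i, i < j → CTLs.Sat T φ (π i)
end

/-- A transition system satisfies a CTL state formula iff all its initial states do. -/
def TS.sat {AP : Type} (T : TS AP) (Φ : CTLs AP) : Prop := ∀ s ∈ T.init, CTLs.Sat T Φ s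

/-- Admissible valuations on the class C: each variable denotes a CTL-expressible set. -/
def AdmissibleVal {AP : Type} (C : Set (TS AP)) (V : ℕ → Set {S : TS AP // S ∈ C}) : Prop :=
  ∀ p, ∃ Φ : CTLs AP, ∀ S : {S : TS AP // S ∈ C}, S ∈ V p ↔ (S : TS AP).sat Φ

/-- The refinement accessibility relation ⇝ on the class C. -/
def refRel {AP : Type} (C : Set (TS AP)) :
    {S : TS AP // S ∈ C} → {S : TS AP // S ∈ C} → Prop :=
  fun S₁ S₂ => Abs S₁.1 S₂.1

/-- Validity of a modal formula at a world of the general frame (C, ⇝, Admiss(CTL)). -/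
def ValidAt {AP : Type} (C : Set (TS AP)) (φ : MF) (S : {S : TS AP // S ∈ C}) : Prop :=
  ∀ V, AdmissibleVal C V → MF.Sat (refRel C) V φ S

/-- Validity on the general frame (C, ⇝, Admiss(CTL)). -/
def ValidOn {AP : Type} (C : Set (TS AP)) (φ : MF) : Prop := ∀ S, ValidAt C φ S

/-- The class of all finite abstractions of T. -/
def FinAbs {AP : Type} (T : TS AP) : Set (TS AP) := {S | Finite S.State ∧ Abs S T}

/-- The class of all abstractions of T. -/
def AllAbs {AP : Type} (T : TS AP) : Set (TS AP) := {S | Abs S T}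

/-- MLAR^fin_T. -/
def MLARfin {AP : Type} (T : TS AP) : Set MF := {φ | ValidOn (FinAbs T) φ}
/-- MLAR^all_T. -/
def MLARall {AP : Type} (T : TS AP) : Set MF := {φ | ValidOn (AllAbs T) φ}
set_option linter.dupNamespace false in
/-- MLAR on the class of all transition systems over the fixed countably infinite AP = ℕ. -/
def MLAR : Set MF := {φ | ValidOn (Set.univ : Set (TS ℕ)) φ}

/-- Finite partial functions {0,…,n−1} ⇀ {0,1}. -/
def FPF (n : ℕ) : Type := Fin n → Option Bool

/-- g ≼ h iff h extends g. -/
def FPFle {n : ℕ} (g h : FPF n) : Prop := ∀ i x, g i = some x → h i = some x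

/-- The modal logic of all finite partial function posets. -/
def S4FPF : Set MF := {φ | ∀ n : ℕ, ∀ V : ℕ → Set (FPF n), ∀ w, MF.Sat FPFle V φ w}

/-- Admissible-set algebra of a general Kripke frame:
closed under complements and finite (including empty and binary) unions. -/
def IsGeneralFrameAdmiss {W : Type*} (𝒜 : Set (Set W)) : Prop :=
  (∅ : Set W) ∈ 𝒜 ∧ (∀ A ∈ 𝒜, Aᶜ ∈ 𝒜) ∧ (∀ A ∈ 𝒜, ∀ B ∈ 𝒜, A ∪ B ∈ 𝒜)

/-- Formulas valid at a world of a general Kripke frame (W, R, 𝒜). -/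
def GValidAt {W : Type*} (R : W → W → Prop) (𝒜 : Set (Set W)) (φ : MF) (c : W) : Prop :=
  ∀ V : ℕ → Set W, (∀ p, V p ∈ 𝒜) → MF.Sat R V φ c

/-- A is a pure button at c: □(b→□b) and □◇b hold at c under V(b) = A. -/
def PureButton {W : Type*} (R : W → W → Prop) (c : W) (A : Set W) : Prop :=
  (∀ d, R c d → d ∈ A → ∀ e, R d e → e ∈ A) ∧ (∀ d, R c d → ∃ e, R d e ∧ e ∈ A)

/-- A is a pure weak button at c: □(b→□b) and ◇b hold at c under V(b) = A. -/
def PureWeakButton {W : Type*} (R : W → W → Prop) (c : W) (A : Set W) : Prop :=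
  (∀ d, R c d → d ∈ A → ∀ e, R d e → e ∈ A) ∧ (∃ e, R c e ∧ e ∈ A)

/-- B is a switch at c: □(◇s ∧ ◇¬s) holds at c under V(s) = B. -/
def IsSwitch {W : Type*} (R : W → W → Prop) (c : W) (B : Set W) : Prop :=
  ∀ d, R c d → (∃ e, R d e ∧ e ∈ B) ∧ (∃ e, R d e ∧ e ∉ B)

/-- C is a B-restricted switch at c:
□(¬B → (◇(s ∧ ¬B) ∧ ◇(¬s ∧ ¬B))) holds at c under V(s) = C. -/
def RestrictedSwitch {W : Type*} (R : W → W → Prop) (c : W) (B C : Set W) : Prop :=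
  ∀ d, R c d → d ∉ B →
    (∃ e, R d e ∧ e ∈ C ∧ e ∉ B) ∧ (∃ e, R d e ∧ e ∉ C ∧ e ∉ B)

/-- Independence of unpushed pure buttons A and switches B at c. -/
def Independent {W : Type*} (R : W → W → Prop) (c : W) {n m : ℕ}
    (A : Fin n → Set W) (B : Fin m → Set W) : Prop :=
  ∀ (I₀ I₁ : Set (Fin n)) (J₀ J₁ : Set (Fin m)), I₀ ⊆ I₁ →
    ∀ d, R c d →
      ((∀ i, i ∈ I₀ ↔ d ∈ A i) ∧ (∀ j, j ∈ J₀ ↔ d ∈ B j)) →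
      ∃ e, R d e ∧ (∀ i, i ∈ I₁ ↔ e ∈ A i) ∧ (∀ j, j ∈ J₁ ↔ e ∈ B j)

/-- Independence until B of pure buttons A and B-restricted switches C at c. -/
def IndependentUntil {W : Type*} (R : W → W → Prop) (c : W) (Bb : Set W) {n m : ℕ}
    (A : Fin n → Set W) (C : Fin m → Set W) : Prop :=
  ∀ (I₀ I₁ : Set (Fin n)) (J₀ J₁ : Set (Fin m)), I₀ ⊆ I₁ →
    ∀ d, R c d →
      ((∀ i, i ∈ I₀ ↔ d ∈ A i) ∧ (∀ j, j ∈ J₀ ↔ d ∈ C j) ∧ d ∉ Bb) →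
      ∃ e, R d e ∧ (∀ i, i ∈ I₁ ↔ e ∈ A i) ∧ (∀ j, j ∈ J₁ ↔ e ∈ C j) ∧ e ∉ Bb

/-- (L, Rr) is a decision at c: a pair of mutually exclusive unpushed pure weak buttons
whose union is an unpushed pure button, with □(¬l ∨ ¬r) and □((◇l ∧ ◇r) ∨ l ∨ r) at c. -/
def Decision {W : Type*} (R : W → W → Prop) (c : W) (L Rr : Set W) : Prop :=
  PureWeakButton R c L ∧ c ∉ L ∧
  PureWeakButton R c Rr ∧ c ∉ Rr ∧
  PureButton R c (L ∪ Rr) ∧ c ∉ L ∪ Rr ∧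
  (∀ d, R c d → ¬(d ∈ L ∧ d ∈ Rr)) ∧
  (∀ d, R c d → (((∃ e, R d e ∧ e ∈ L) ∧ (∃ e, R d e ∧ e ∈ Rr)) ∨ d ∈ L ∨ d ∈ Rr))

/-- Independence of decisions at c. -/
def IndependentDecisions {W : Type*} (R : W → W → Prop) (c : W) {n : ℕ}
    (L Rr : Fin n → Set W) : Prop :=
  ∀ (I₀ I₁ J₀ J₁ : Set (Fin n)), I₀ ⊆ I₁ → J₀ ⊆ J₁ → (∀ i ∈ J₁, i ∉ I₁) →
    ∀ d, R c d →
      ((∀ i, i ∈ I₀ ↔ d ∈ L i) ∧ (∀ i, i ∈ J₀ ↔ d ∈ Rr i)) →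
      ∃ e, R d e ∧ (∀ i, i ∈ I₁ ↔ e ∈ L i) ∧ (∀ i, i ∈ J₁ ↔ e ∈ Rr i)

/-!
Unfold `T` into the system of its infinite paths, with the shift as transition relation. This
system is deterministic, and an abstraction map onto a deterministic system is a bounded
morphism: every state of the refinement has a successor by seriality, and determinism forces
its image, which gives the back condition. Paths then lift along the map, so CTL satisfaction is preserved
state by state.
-/

namespace TS

variable {AP : Type}

def IsDeterministic (S : TS AP) : Prop := ∀ a b b', S.rel a b → S.rel a b' → b = b'

theorem exists_path_from (T : TS AP) (s : T.State) : ∃ π, T.IsPath π ∧ π 0 = s := by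
  choose next hnext using T.serial
  exact ⟨fun n => next^[n] s, fun n => by simpa only [Function.iterate_succ_apply'] using hnext _,
    rfl⟩

theorem exists_path_of_rel (T : TS AP) {a b : T.State} (hab : T.rel a b) :
    ∃ π, T.IsPath π ∧ π 0 = a ∧ π 1 = b := by
  obtain ⟨π, hπ, rfl⟩ := T.exists_path_from b
  refine ⟨fun | 0 => a | n + 1 => π n, ?_, rfl, rfl⟩
  rintro (_ | n)
  exacts [hab, hπ n]

def pathUnfolding (T : TS AP) : TS AP where
  State := {π : ℕ → T.State // T.IsPath π}
  rel π π' := π'.1 = fun i => π.1 (i + 1)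
  init := {π | π.1 0 ∈ T.init}
  label π := T.label (π.1 0)
  nonempty := by
    obtain ⟨s⟩ := T.nonempty
    obtain ⟨π, hπ, -⟩ := T.exists_path_from s
    exact ⟨⟨π, hπ⟩⟩
  serial π := ⟨⟨fun i => π.1 (i + 1), fun i => π.2 (i + 1)⟩, rfl⟩

theorem pathUnfolding_isDeterministic (T : TS AP) : T.pathUnfolding.IsDeterministic :=
  fun _ _ _ hb hb' => Subtype.ext (hb.trans hb'.symm)

theorem isAbstractionMap_pathUnfolding (T : TS AP) :
    IsAbstractionMap T T.pathUnfolding fun π => π.1 0 := by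
  refine ⟨fun s => ?_, fun _ => rfl, fun a b => ⟨fun hab => ?_, ?_⟩, ?_⟩
  · obtain ⟨π, hπ, rfl⟩ := T.exists_path_from s
    exact ⟨⟨π, hπ⟩, rfl⟩
  · obtain ⟨π, hπ, rfl, rfl⟩ := T.exists_path_of_rel hab
    exact ⟨⟨π, hπ⟩, ⟨fun i => π (i + 1), fun i => hπ (i + 1)⟩, rfl, rfl, rfl⟩
  · rintro ⟨π, π', hshift, rfl, rfl⟩
    show T.rel (π.1 0) (π'.1 0)
    rw [congrFun hshift 0]
    exact π.2 0
  · ext s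
    refine ⟨fun hs => ?_, ?_⟩
    · obtain ⟨π, hπ, rfl⟩ := T.exists_path_from s
      exact ⟨⟨π, hπ⟩, hs, rfl⟩
    · rintro ⟨π, hπ, rfl⟩
      exact hπ

end TS

section BoundedMorphism

variable {AP : Type} {R S : TS AP}

structure IsBoundedMorphism (R S : TS AP) (g : R.State → S.State) : Prop where
  label_eq : ∀ x, S.label (g x) = R.label x
  rel_map : ∀ x y, R.rel x y → S.rel (g x) (g y)
  exists_rel_of_rel : ∀ x b, S.rel (g x) b → ∃ y, R.rel x y ∧ g y = b

theorem IsAbstractionMap.isBoundedMorphism {g : R.State → S.State}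
    (hg : IsAbstractionMap S R g) (hS : S.IsDeterministic) : IsBoundedMorphism R S g := by
  obtain ⟨-, hlabel, hrel, -⟩ := hg
  have rel_map : ∀ x y, R.rel x y → S.rel (g x) (g y) :=
    fun x y hxy => (hrel _ _).2 ⟨x, y, hxy, rfl, rfl⟩
  refine ⟨hlabel, rel_map, fun x b hb => ?_⟩
  obtain ⟨y, hxy⟩ := R.serial x
  exact ⟨y, hxy, hS _ _ _ (rel_map x y hxy) hb⟩

namespace IsBoundedMorphism

variable {g : R.State → S.State}

theorem isPath_comp (hg : IsBoundedMorphism R S g) {σ : ℕ → R.State} (hσ : R.IsPath σ) :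
    S.IsPath (g ∘ σ) :=
  fun i => hg.rel_map _ _ (hσ i)

theorem exists_path_lift (hg : IsBoundedMorphism R S g) {x : R.State} {ρ : ℕ → S.State}
    (hρ : S.IsPath ρ) (h0 : ρ 0 = g x) : ∃ σ, R.IsPath σ ∧ σ 0 = x ∧ g ∘ σ = ρ := by
  have step : ∀ n y, ∃ y', g y = ρ n → R.rel y y' ∧ g y' = ρ (n + 1) := by
    intro n y
    by_cases hy : g y = ρ n
    · obtain ⟨y', hyy', hgy'⟩ := hg.exists_rel_of_rel y _ (hy ▸ hρ n)
      exact ⟨y', fun _ => ⟨hyy', hgy'⟩⟩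
    · exact ⟨y, fun h => absurd h hy⟩
  choose next hnext using step
  let σ : ℕ → R.State := fun n => Nat.rec x next n
  have hσ : ∀ n, g (σ n) = ρ n := by
    intro n
    induction n with
    | zero => exact h0.symm
    | succ n ih => exact (hnext n (σ n) ih).2
  exact ⟨σ, fun n => (hnext n (σ n) (hσ n)).1, rfl, funext hσ⟩

mutual

theorem sat_iff (hg : IsBoundedMorphism R S g) :
    ∀ (Φ : CTLs AP) (x : R.State), CTLs.Sat R Φ x ↔ CTLs.Sat S Φ (g x)
  | .top, _ => Iff.rfl
  | .atom a, x => by rw [CTLs.Sat, CTLs.Sat, hg.label_eq]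
  | .and φ ψ, x => and_congr (hg.sat_iff φ x) (hg.sat_iff ψ x)
  | .neg φ, x => not_congr (hg.sat_iff φ x)
  | .ex φ, x => by
      simp only [CTLs.Sat]
      constructor
      · rintro ⟨σ, hσ, rfl, hφ⟩
        exact ⟨g ∘ σ, hg.isPath_comp hσ, rfl, (hg.pathSat_iff φ σ).1 hφ⟩
      · rintro ⟨ρ, hρ, h0, hφ⟩
        obtain ⟨σ, hσ, rfl, rfl⟩ := hg.exists_path_lift hρ h0
        exact ⟨σ, hσ, rfl, (hg.pathSat_iff φ σ).2 hφ⟩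
  | .al φ, x => by
      simp only [CTLs.Sat]
      constructor
      · intro h ρ hρ h0
        obtain ⟨σ, hσ, rfl, rfl⟩ := hg.exists_path_lift hρ h0
        exact (hg.pathSat_iff φ σ).1 (h σ hσ rfl)
      · rintro h σ hσ rfl
        exact (hg.pathSat_iff φ σ).2 (h (g ∘ σ) (hg.isPath_comp hσ) rfl)

theorem pathSat_iff (hg : IsBoundedMorphism R S g) :
    ∀ (φ : CTLp AP) (σ : ℕ → R.State), CTLp.Sat R φ σ ↔ CTLp.Sat S φ (g ∘ σ)
  | .next Φ, σ => hg.sat_iff Φ (σ 1)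
  | .untl Φ Ψ, σ => exists_congr fun j => and_congr (hg.sat_iff Ψ (σ j))
      (forall_congr' fun i => imp_congr Iff.rfl (hg.sat_iff Φ (σ i)))

end

end IsBoundedMorphism

theorem IsAbstractionMap.sat_iff_of_isDeterministic {g : R.State → S.State}
    (hg : IsAbstractionMap S R g) (hS : S.IsDeterministic) (Φ : CTLs AP) :
    S.sat Φ ↔ R.sat Φ := by
  have hsat := (hg.isBoundedMorphism hS).sat_iff Φ
  rw [TS.sat, TS.sat, hg.2.2.2, Set.forall_mem_image]
  exact forall₂_congr fun x _ => (hsat x).symm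

end BoundedMorphism

/-- Every transition system T has a refinement S such that every refinement
of S satisfies exactly the same CTL state formulas as S. -/
theorem stmt_5 (AP : Type) (T : TS AP) :
    ∃ S : TS AP, Abs T S ∧ ∀ R : TS AP, Abs S R → ∀ Φ : CTLs AP, (S.sat Φ ↔ R.sat Φ) :=
  ⟨T.pathUnfolding, ⟨_, T.isAbstractionMap_pathUnfolding⟩, fun _ ⟨_, hg⟩ =>
    hg.sat_iff_of_isDeterministic T.pathUnfolding_isDeterministic⟩

end MLAR
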